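/- arXiv:1409.0485 — 2 statements merged into one kernel-verified Lean document; each statement's English description precedes it below -/
import Mathlib

section
/- Let D be a (v,k,λ)-covering on point set {1,...,v} with excess multigraph G (where the multiplicity of edge uw is r_D(uw) − λ, with r_D(uw) the number of blocks containing both u and w). If there is a subset S of the points and positive reals (c_u)_{u∈S} such that for each u in S, ∑_{w∈S, w≠u} c_w·μ_{G[S]}(uw) < c_u·(r_D(u) − λ), where r_D(u) is the number of blocks containing u, then D has at least |S| blocks. -/
/-!
Let `N` be the incidence matrix between the points of `S` and the blocks. The Gram matrix
`N Nᵀ` has entries `r(uw)`, so it is the excess matrix `(r(uw) - λ)` plus the positive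
semidefinite matrix with all entries `λ`. The excess matrix is symmetric, and conjugating it by
`diag c` makes it strictly diagonally dominant (its off-diagonal entries are `≥ 0`), hence positive
definite. So `N Nᵀ` is invertible, and `|S| = rank (N Nᵀ) ≤ rank N ≤` number of blocks.
-/

open Finset Matrix

namespace Matrix

variable {ι : Type*} [Fintype ι] [DecidableEq ι]

theorem posDef_of_sum_abs_lt_diag {A : Matrix ι ι ℝ} (hA : A.IsSymm)
    (h : ∀ i, ∑ j ∈ univ.erase i, |A i j| < A i i) : A.PosDef := by
  refine PosDef.of_dotProduct_mulVec_pos hA fun x hx => ?_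
  obtain ⟨k, hk⟩ := Function.ne_iff.mp hx
  have hoff : ∀ i j, -(|A i j| * (x i ^ 2 + x j ^ 2) / 2) ≤ x i * A i j * x j := by
    intro i j
    nlinarith [neg_abs_le (A i j), le_abs_self (A i j), abs_nonneg (A i j),
      sq_nonneg (x i + x j), sq_nonneg (x i - x j)]
  have hswap : ∑ i, ∑ j ∈ univ.erase i, |A i j| * x j ^ 2
      = ∑ i, ∑ j ∈ univ.erase i, |A i j| * x i ^ 2 := by
    rw [sum_comm' (t' := univ) (s' := fun j => univ.erase j) (by simp [eq_comm])]
    exact sum_congr rfl fun i _ => sum_congr rfl fun j _ => by rw [hA.apply i j]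
  calc 0 < ∑ i, (A i i - ∑ j ∈ univ.erase i, |A i j|) * x i ^ 2 :=
        sum_pos' (fun i _ => mul_nonneg (sub_nonneg.2 (h i).le) (sq_nonneg _))
          ⟨k, mem_univ k, mul_pos (sub_pos.2 (h k)) (pow_two_pos_of_ne_zero hk)⟩
    _ = ∑ i, (x i * A i i * x i + ∑ j ∈ univ.erase i, -(|A i j| * (x i ^ 2 + x j ^ 2) / 2)) := by
        simp only [sum_neg_distrib, mul_add, add_div, sum_add_distrib, sum_sub_distrib,
          ← sum_div, hswap, sub_mul, sum_mul,
          show ∀ i, x i * A i i * x i = A i i * x i ^ 2 from fun i => by ring]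
        ring
    _ ≤ ∑ i, (x i * A i i * x i + ∑ j ∈ univ.erase i, x i * A i j * x j) := by
        gcongr with i _ j
        exact hoff i j
    _ = star x ⬝ᵥ A *ᵥ x := by
        simp [dotProduct, mulVec, mul_sum, mul_assoc]

theorem posDef_of_weighted_sum_abs_lt_diag {A : Matrix ι ι ℝ} (hA : A.IsSymm) {c : ι → ℝ}
    (hc : ∀ i, 0 < c i) (h : ∀ i, ∑ j ∈ univ.erase i, c j * |A i j| < c i * A i i) :
    A.PosDef := by
  have hD : IsUnit (diagonal c) := by
    simpa [isUnit_diagonal, Pi.isUnit_iff] using fun i => (hc i).ne'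
  rw [← hD.posDef_star_left_conjugate_iff]
  have hentry : ∀ i j, (star (diagonal c) * A * diagonal c) i j = c i * A i j * c j := by
    simp [star_eq_conjTranspose, diagonal_mul, mul_diagonal]
  refine posDef_of_sum_abs_lt_diag ?_ fun i => ?_
  · ext i j
    simp only [transpose_apply, hentry, hA.apply i j]
    ring
  · simp only [hentry, abs_mul, abs_of_pos (hc _)]
    calc ∑ j ∈ univ.erase i, c i * |A i j| * c j = c i * ∑ j ∈ univ.erase i, c j * |A i j| := by
          rw [mul_sum]
          exact sum_congr rfl fun j _ => by ring
      _ < c i * (c i * A i i) := mul_lt_mul_of_pos_left (h i) (hc i)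
      _ = c i * A i i * c i := by ring

end Matrix

theorem Multiset.sum_coe_sort_boole {α R : Type*} [DecidableEq α] [AddCommMonoidWithOne R]
    (m : Multiset α) (p : α → Prop) [DecidablePred p] :
    ∑ x : m, (if p x then (1 : R) else 0) = m.countP p := by
  conv_rhs => rw [← Multiset.map_univ_coe m, Multiset.countP_map]
  simp [Finset.card_def]

section Covering

variable {α : Type*} [DecidableEq α] (𝓑 : Multiset (Finset α)) (S : Finset α)

def incidenceMatrix : Matrix S 𝓑 ℝ :=
  of fun u B => if (u : α) ∈ (B : Finset α) then 1 else 0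

/-- Off the diagonal this is the multiplicity `μ(uw)` in the excess multigraph; on the
diagonal it is `r(u) - λ`. -/
def excessMatrix (l : ℕ) : Matrix S S ℝ :=
  of fun u w => (𝓑.countP (fun b => (u : α) ∈ b ∧ (w : α) ∈ b) : ℝ) - l

theorem incidenceMatrix_mul_transpose (l : ℕ) :
    incidenceMatrix 𝓑 S * (incidenceMatrix 𝓑 S)ᵀ
      = excessMatrix 𝓑 S l + (l : ℝ) • vecMulVec 1 1 := by
  ext u w
  simp [incidenceMatrix, excessMatrix, mul_apply, ← Multiset.sum_coe_sort_boole, ← ite_and,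
    and_comm]

theorem card_le_card_of_posDef_incidenceMatrix_mul_transpose
    (h : (incidenceMatrix 𝓑 S * (incidenceMatrix 𝓑 S)ᵀ).PosDef) :
    S.card ≤ Multiset.card 𝓑 :=
  calc S.card = (incidenceMatrix 𝓑 S * (incidenceMatrix 𝓑 S)ᵀ).rank := by
        rw [rank_of_isUnit _ h.isUnit, Fintype.card_coe]
    _ ≤ (incidenceMatrix 𝓑 S).rank := rank_mul_le_left _ _
    _ ≤ Fintype.card 𝓑 := rank_le_card_width _
    _ = Multiset.card 𝓑 := Multiset.card_coe 𝓑

theorem excessMatrix_posDef {l : ℕ}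
    (hcov : ∀ u w : S, u ≠ w → l ≤ 𝓑.countP (fun b => (u : α) ∈ b ∧ (w : α) ∈ b))
    {c : α → ℝ} (hc : ∀ u ∈ S, 0 < c u)
    (hdom : ∀ u ∈ S, ∑ w ∈ S.erase u, c w * ((𝓑.countP (fun b => u ∈ b ∧ w ∈ b) : ℝ) - l)
        < c u * ((𝓑.countP (fun b => u ∈ b) : ℝ) - l)) :
    (excessMatrix 𝓑 S l).PosDef := by
  refine posDef_of_weighted_sum_abs_lt_diag ?_ (c := fun u => c u) (fun u => hc u u.2)
    fun u => ?_
  · ext u w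
    simp [excessMatrix, and_comm]
  · have hnonneg : ∀ w ∈ univ.erase u, 0 ≤ excessMatrix 𝓑 S l u w := fun w hw =>
      sub_nonneg.2 (by exact_mod_cast hcov u w (ne_of_mem_erase hw).symm)
    rw [sum_congr rfl fun w hw => by rw [abs_of_nonneg (hnonneg w hw)]]
    simp only [excessMatrix, of_apply, univ_eq_attach, and_self]
    rw [sum_erase_attach fun w => c w * ((𝓑.countP (fun b => (u : α) ∈ b ∧ w ∈ b) : ℝ) - l)]
    exact hdom u u.2

end Covering

theorem stmt_9_general (v l : ℕ)
    (𝓑 : Multiset (Finset (Fin v)))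
    (hcov : ∀ u w : Fin v, u ≠ w → l ≤ 𝓑.countP (fun b => u ∈ b ∧ w ∈ b))
    (S : Finset (Fin v)) (c : Fin v → ℝ) (hc : ∀ u ∈ S, 0 < c u)
    (hdom : ∀ u ∈ S,
      ∑ w ∈ S.erase u,
          c w * ((𝓑.countP (fun b => u ∈ b ∧ w ∈ b) : ℝ) - l)
        < c u * ((𝓑.countP (fun b => u ∈ b) : ℝ) - l)) :
    S.card ≤ Multiset.card 𝓑 := by
  have hexcess := excessMatrix_posDef 𝓑 S
    (fun u w huw => hcov u w (Subtype.coe_ne_coe.2 huw)) hc hdom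
  have hall : ((l : ℝ) • vecMulVec 1 1 : Matrix S S ℝ).PosSemidef :=
    (posSemidef_vecMulVec_self_star 1).smul (Nat.cast_nonneg l)
  apply card_le_card_of_posDef_incidenceMatrix_mul_transpose 𝓑 S
  rw [incidenceMatrix_mul_transpose 𝓑 S l]
  exact hexcess.add_posSemidef hall

theorem stmt_9 (v k l : ℕ) (hl : 0 < l) (hk : 3 ≤ k) (hkv : k < v)
    (𝓑 : Multiset (Finset (Fin v)))
    (hblocks : ∀ b ∈ 𝓑, b.card = k)
    (hcov : ∀ u w : Fin v, u ≠ w → l ≤ 𝓑.countP (fun b => u ∈ b ∧ w ∈ b))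
    (S : Finset (Fin v)) (c : Fin v → ℝ) (hc : ∀ u ∈ S, 0 < c u)
    (hdom : ∀ u ∈ S,
      ∑ w ∈ S.erase u,
          c w * ((𝓑.countP (fun b => u ∈ b ∧ w ∈ b) : ℝ) - l)
        < c u * ((𝓑.countP (fun b => u ∈ b) : ℝ) - l)) :
    S.card ≤ Multiset.card 𝓑 :=
  stmt_9_general v l 𝓑 hcov S c hc hdom
end

section
/- Let v, k, λ be positive integers with 3 ≤ k < v, and let r, d be the integers with λ(v−1) = r(k−1) − d and 0 ≤ d < k−1. If d < r − λ, then every (v,k,λ)-covering has at least ⌈v(r+1)/(k+1)⌉ blocks. -/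
/-!
Write `r_x` for the number of blocks through `x` and `λ_xy` for the number through `x` and `y`.
Double counting gives `∑ r_x = b k` and `∑_{y ≠ x} λ_xy = r_x (k - 1) ≥ λ (v - 1)`, so `r_x ≥ r`
for every point, and at a point with `r_x = r` the excesses `λ_xy - λ` sum to exactly `d`.
On the set `T` of such points the Gram matrix `N Nᵀ` of the incidence matrix is therefore
`λ J` plus a symmetric matrix whose diagonal `r - λ` exceeds its off-diagonal row sums `≤ d`;
it is positive definite, so `|T| ≤ rank N ≤ b`.
Hence `b k = ∑ r_x ≥ (r + 1) v - |T| ≥ (r + 1) v - b`.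
-/

open Finset Matrix

theorem Matrix.posDef_of_sum_abs_lt_diag_s10 {n : Type*} [Fintype n] [DecidableEq n]
    {A : Matrix n n ℝ} (hA : A.IsHermitian)
    (hdom : ∀ i, ∑ j ∈ univ.erase i, |A i j| < A i i) : A.PosDef := by
  have hsymm : ∀ i j, A j i = A i j := fun i j => by simpa using hA.apply i j
  refine posDef_iff_dotProduct_mulVec.mpr ⟨hA, fun x hx => ?_⟩
  set w : n → n → ℝ := fun i j => if i = j then 0 else |A i j| with hw
  have hw_row : ∀ i, ∑ j, w i j = ∑ j ∈ univ.erase i, |A i j| := fun i => by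
    rw [← Finset.sum_erase_add _ _ (mem_univ i)]
    simp only [hw, if_pos rfl, add_zero]
    exact Finset.sum_congr rfl fun j hj => if_neg (Finset.ne_of_mem_erase hj).symm
  have hw_symm : ∀ i j, w j i = w i j := fun i j => by
    simp only [hw, eq_comm, hsymm]
  have hterm : ∀ i j, (if i = j then A i i * x i ^ 2 else 0) - w i j * (x i ^ 2 + x j ^ 2) / 2
      ≤ x i * A i j * x j := fun i j => by
    by_cases hij : i = j
    · subst hij
      simp only [hw, ↓reduceIte]
      exact le_of_eq (by ring)
    · simp only [hw, if_neg hij, zero_sub]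
      have hprod := neg_abs_le (x i * A i j * x j)
      rw [abs_mul, abs_mul] at hprod
      have hamgm : 2 * |x i| * |x j| ≤ x i ^ 2 + x j ^ 2 := by
        simpa only [sq_abs] using two_mul_le_add_sq |x i| |x j|
      nlinarith [abs_nonneg (A i j)]
  have hoff : ∑ i, ∑ j, w i j * (x i ^ 2 + x j ^ 2) / 2 = ∑ i, (∑ j, w i j) * x i ^ 2 := by
    have hswap : ∑ i, ∑ j, w i j * x j ^ 2 = ∑ i, ∑ j, w i j * x i ^ 2 := by
      rw [Finset.sum_comm]; simp only [hw_symm]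
    simp only [mul_add, add_div, sum_add_distrib, ← sum_div, hswap, Finset.sum_mul]
    ring
  obtain ⟨i₀, hi₀⟩ := Function.ne_iff.mp hx
  simp only [Pi.zero_apply] at hi₀
  calc 0 < ∑ i, (A i i - ∑ j, w i j) * x i ^ 2 :=
        Finset.sum_pos' (fun i _ => mul_nonneg (by linarith [hdom i, hw_row i]) (sq_nonneg _))
          ⟨i₀, mem_univ _, mul_pos (by linarith [hdom i₀, hw_row i₀]) (by positivity)⟩
    _ = ∑ i, ∑ j, ((if i = j then A i i * x i ^ 2 else 0) - w i j * (x i ^ 2 + x j ^ 2) / 2) := by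
        simp only [Finset.sum_sub_distrib, Finset.sum_ite_eq, mem_univ, if_true, hoff, sub_mul]
    _ ≤ ∑ i, ∑ j, x i * A i j * x j :=
        Finset.sum_le_sum fun i _ => Finset.sum_le_sum fun j _ => hterm i j
    _ = star x ⬝ᵥ (A *ᵥ x) := by simp [dotProduct, mulVec, Finset.mul_sum, mul_assoc]

theorem Matrix.card_le_card_of_posDef_mul_transpose {m n : Type*} [Fintype m] [Fintype n]
    (N : Matrix m n ℝ) (h : (N * Nᵀ).PosDef) : Fintype.card m ≤ Fintype.card n := by
  classical
  rw [← rank_of_isUnit _ h.isUnit]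
  exact (rank_mul_le_left N Nᵀ).trans (rank_le_card_width N)

theorem Finset.card_mul_succ_le_sum_add_card_filter_eq {α : Type*} [Fintype α] (f : α → ℕ)
    {r : ℕ} (h : ∀ x, r ≤ f x) : Fintype.card α * (r + 1) ≤ ∑ x, f x + #{x | f x = r} := by
  rw [card_filter, ← sum_add_distrib, ← card_univ, ← smul_eq_mul, ← sum_const]
  exact sum_le_sum fun x _ => by have := h x; split_ifs <;> omega

theorem Multiset.countP_eq_card_filter_univ {α : Type*} [DecidableEq α] (m : Multiset α)
    (p : α → Prop) [DecidablePred p] : m.countP p = #{x : m | p x} := by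
  conv_lhs => rw [← Multiset.map_univ_coe m]
  rw [Multiset.countP_map, card_def, filter_val]

namespace BlockDesign

variable {α ι : Type*} [DecidableEq α] [Fintype ι] (B : ι → Finset α)

def degree (x : α) : ℕ := #{i | x ∈ B i}

def codegree (x y : α) : ℕ := #{i | x ∈ B i ∧ y ∈ B i}

def incidenceMatrix : Matrix α ι ℝ := of fun x i => if x ∈ B i then 1 else 0

variable {B}

theorem codegree_self (x : α) : codegree B x x = degree B x := by
  simp [codegree, degree]

theorem codegree_comm (x y : α) : codegree B x y = codegree B y x := by
  simp only [codegree, and_comm]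

theorem incidenceMatrix_mul_transpose_apply (x y : α) :
    (incidenceMatrix B * (incidenceMatrix B)ᵀ) x y = codegree B x y := by
  simp [incidenceMatrix, codegree, mul_apply, ← ite_and, and_comm]

theorem sum_degree [Fintype α] {k : ℕ} (hB : ∀ i, #(B i) = k) :
    ∑ x, degree B x = Fintype.card ι * k := by
  simp only [degree, card_filter]
  rw [Finset.sum_comm]
  simp [hB]

theorem sum_codegree_erase [Fintype α] {k : ℕ} (hB : ∀ i, #(B i) = k) (x : α) :
    ∑ y ∈ univ.erase x, codegree B x y = degree B x * (k - 1) := by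
  simp only [codegree, degree, card_filter]
  rw [Finset.sum_comm, Finset.sum_mul]
  refine Finset.sum_congr rfl fun i _ => ?_
  by_cases hx : x ∈ B i
  · simp [hx, hB]
  · simp [hx]

theorem le_degree [Fintype α] {k l r d : ℕ} (hB : ∀ i, #(B i) = k) {x : α}
    (hcov : ∀ y, y ≠ x → l ≤ codegree B x y)
    (hrd : l * (Fintype.card α - 1) + d = r * (k - 1)) (hd : d < k - 1) : r ≤ degree B x := by
  have hpairs : l * (Fintype.card α - 1) ≤ degree B x * (k - 1) := by
    rw [← sum_codegree_erase hB x]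
    calc l * (Fintype.card α - 1) = ∑ _y ∈ univ.erase x, l := by simp [mul_comm]
      _ ≤ _ := sum_le_sum fun y hy => hcov y (ne_of_mem_erase hy)
  by_contra! hlt
  have : (degree B x + 1) * (k - 1) ≤ r * (k - 1) := Nat.mul_le_mul_right _ hlt
  nlinarith

theorem sum_codegree_sub_eq [Fintype α] {k l r d : ℕ} (hB : ∀ i, #(B i) = k) {x : α}
    (hrd : l * (Fintype.card α - 1) + d = r * (k - 1)) (hx : degree B x = r) :
    ∑ y ∈ univ.erase x, ((codegree B x y : ℝ) - l) = d := by
  have h := sum_codegree_erase hB x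
  rw [hx, ← hrd] at h
  rw [sum_sub_distrib, ← Nat.cast_sum, h, sum_const, card_erase_of_mem (mem_univ x), card_univ]
  push_cast
  ring

theorem degree_subtype (p : α → Prop) [DecidablePred p] (x : Subtype p) :
    degree (fun i => (B i).subtype p) x = degree B x := by
  simp [degree]

theorem codegree_subtype (p : α → Prop) [DecidablePred p] (x y : Subtype p) :
    codegree (fun i => (B i).subtype p) x y = codegree B x y := by
  simp [codegree]

theorem card_le_card_of_regular [Fintype α] {l r d : ℕ} (hdeg : ∀ x, degree B x = r)
    (hcov : ∀ x y, x ≠ y → l ≤ codegree B x y)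
    (hexc : ∀ x, ∑ y ∈ univ.erase x, ((codegree B x y : ℝ) - l) ≤ d) (hdlr : d + l < r) :
    Fintype.card α ≤ Fintype.card ι := by
  set N := incidenceMatrix B
  set E := N * Nᵀ - (l : ℝ) • vecMulVec 1 (star 1)
  have hE : ∀ x y, E x y = codegree B x y - l := fun x y => by
    simp [E, N, incidenceMatrix_mul_transpose_apply]
  have hE_posDef : E.PosDef := by
    refine posDef_of_sum_abs_lt_diag_s10 (IsHermitian.ext fun x y => by simp [hE, codegree_comm])
      fun x => ?_
    have hdlr' : (d : ℝ) + l < r := by exact_mod_cast hdlr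
    calc ∑ y ∈ univ.erase x, |E x y| = ∑ y ∈ univ.erase x, ((codegree B x y : ℝ) - l) :=
          sum_congr rfl fun y hy => by
            rw [hE, abs_of_nonneg (sub_nonneg.mpr (mod_cast hcov x y (ne_of_mem_erase hy).symm))]
      _ ≤ d := hexc x
      _ < E x x := by rw [hE, codegree_self, hdeg]; linarith
  apply card_le_card_of_posDef_mul_transpose N
  rw [← sub_add_cancel (N * Nᵀ) ((l : ℝ) • vecMulVec 1 (star 1))]
  exact hE_posDef.add_posSemidef ((posSemidef_vecMulVec_self_star 1).smul (Nat.cast_nonneg l))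

theorem card_filter_degree_eq_le [Fintype α] {k l r d : ℕ} (hB : ∀ i, #(B i) = k)
    (hcov : ∀ x y, x ≠ y → l ≤ codegree B x y)
    (hrd : l * (Fintype.card α - 1) + d = r * (k - 1)) (hdlr : d + l < r) :
    #{x | degree B x = r} ≤ Fintype.card ι := by
  set T : Finset α := {x | degree B x = r}
  rw [← Fintype.card_coe T]
  refine card_le_card_of_regular (B := fun i => (B i).subtype (· ∈ T)) (l := l) (d := d)
    (fun x => (degree_subtype _ x).trans (mem_filter.mp x.2).2)
    (fun x y hxy => by simpa [codegree_subtype] using hcov x y (Subtype.coe_ne_coe.mpr hxy))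
    (fun x => ?_) hdlr
  calc ∑ y ∈ univ.erase x, ((codegree (fun i => (B i).subtype (· ∈ T)) x y : ℝ) - l)
      = ∑ y ∈ (univ.erase x).map (Function.Embedding.subtype (· ∈ T)),
          ((codegree B x y : ℝ) - l) := by simp [sum_map, codegree_subtype]
    _ ≤ ∑ y ∈ univ.erase (x : α), ((codegree B x y : ℝ) - l) := by
        refine sum_le_sum_of_subset_of_nonneg ?_ fun y hy _ => ?_
        · intro y hy
          simp only [mem_map, mem_erase, mem_univ, and_true] at hy ⊢
          obtain ⟨y, hyx, rfl⟩ := hy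
          exact Subtype.coe_ne_coe.mpr hyx
        · exact sub_nonneg.mpr (mod_cast hcov x y (ne_of_mem_erase hy).symm)
    _ = d := sum_codegree_sub_eq hB hrd (mem_filter.mp x.2).2

theorem card_mul_succ_le_card_mul_succ [Fintype α] {k l r d : ℕ} (hB : ∀ i, #(B i) = k)
    (hcov : ∀ x y, x ≠ y → l ≤ codegree B x y)
    (hrd : l * (Fintype.card α - 1) + d = r * (k - 1)) (hd : d < k - 1) (hdlr : d + l < r) :
    Fintype.card α * (r + 1) ≤ Fintype.card ι * (k + 1) :=
  calc Fintype.card α * (r + 1) ≤ ∑ x, degree B x + #{x | degree B x = r} :=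
        card_mul_succ_le_sum_add_card_filter_eq _ fun x =>
          le_degree hB (fun y hy => hcov x y hy.symm) hrd hd
    _ ≤ Fintype.card ι * k + Fintype.card ι :=
        add_le_add (sum_degree hB).le (card_filter_degree_eq_le hB hcov hrd hdlr)
    _ = Fintype.card ι * (k + 1) := by ring

end BlockDesign

theorem stmt_10_general (v k l r d : ℕ)
    (hrd : l * (v - 1) + d = r * (k - 1)) (hd : d < k - 1) (hdr : d + l < r)
    (𝓑 : Multiset (Finset (Fin v)))
    (hblocks : ∀ b ∈ 𝓑, b.card = k)
    (hcov : ∀ u w : Fin v, u ≠ w → l ≤ 𝓑.countP (fun b => u ∈ b ∧ w ∈ b)) :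
    (⌈(v * (r + 1) : ℚ) / (k + 1)⌉ : ℤ) ≤ (Multiset.card 𝓑 : ℤ) := by
  have hbound : v * (r + 1) ≤ Multiset.card 𝓑 * (k + 1) := by
    simpa [Multiset.card_coe] using BlockDesign.card_mul_succ_le_card_mul_succ
      (B := fun b : 𝓑 => (b : Finset (Fin v))) (fun b => hblocks b Multiset.coe_mem)
      (fun x y hxy => by
        simpa [BlockDesign.codegree, Multiset.countP_eq_card_filter_univ] using hcov x y hxy)
      (by simpa using hrd) hd hdr
  rw [Int.ceil_le, div_le_iff₀ (by positivity)]
  exact_mod_cast hbound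

theorem stmt_10 (v k l r d : ℕ) (hl : 0 < l) (hk : 3 ≤ k) (hkv : k < v)
    (hrd : l * (v - 1) + d = r * (k - 1)) (hd : d < k - 1) (hdr : d + l < r)
    (𝓑 : Multiset (Finset (Fin v)))
    (hblocks : ∀ b ∈ 𝓑, b.card = k)
    (hcov : ∀ u w : Fin v, u ≠ w → l ≤ 𝓑.countP (fun b => u ∈ b ∧ w ∈ b)) :
    (⌈(v * (r + 1) : ℚ) / (k + 1)⌉ : ℤ) ≤ (Multiset.card 𝓑 : ℤ) :=
  stmt_10_general v k l r d hrd hd hdr 𝓑 hblocks hcov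
end
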